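/- arXiv:1508.00863 — 3 statements merged into one kernel-verified Lean document; each statement's English description precedes it below -/
import Mathlib

section
/- For every ρ > 0, every real k > 0 and every real x > 0, the Wright function satisfies the structural representation ₁Ψ₁(ρ,k;ρ,0;x) = ∫_0^∞ e^{-τ} τ^{k-1} φ(ρ,0; x·τ^ρ) dτ. -/
open Real MeasureTheory Set Filter

/-- The Wright function ₁Ψ₁(ρ,k;ρ,0;x) = ∑_{n=1}^∞ (Γ(k+ρn)/Γ(ρn)) xⁿ/n!,
with the convention 1/Γ = 0 at nonpositive integers (where `Real.Gamma` vanishes). -/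
noncomputable def wrightPsi (ρ k x : ℝ) : ℝ :=
  ∑' n : ℕ, Real.Gamma (k + ρ * ((n : ℝ) + 1)) / Real.Gamma (ρ * ((n : ℝ) + 1)) *
    (x ^ (n + 1) / ((n + 1).factorial : ℝ))

/-- The reduced Wright function φ(ρ,0;x) = ∑_{n=1}^∞ xⁿ/(n! Γ(ρn)),
with the convention 1/Γ = 0 at nonpositive integers. -/
noncomputable def redWright (ρ x : ℝ) : ℝ :=
  ∑' n : ℕ, x ^ (n + 1) / (((n + 1).factorial : ℝ) * Real.Gamma (ρ * ((n : ℝ) + 1)))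

/-!
Expand φ(ρ,0; x τ^ρ) in its power series and integrate term by term against e^{-τ} τ^{k-1}:
the n-th term contributes xⁿ Γ(k + ρn) / (n! Γ(ρn)) by Euler's integral for Γ, which is the
n-th term of ₁Ψ₁. All terms are nonnegative, so monotone convergence justifies the interchange
without any a priori bound on the growth of Γ(k + ρn) / Γ(ρn); if the Wright series diverged,
both sides would be the junk value 0.
-/

theorem integral_tsum_of_nonneg {α ι : Type*} [MeasurableSpace α] [Countable ι]
    {μ : Measure α} {f : ι → α → ℝ} (hf_int : ∀ i, Integrable (f i) μ)
    (hf_nonneg : ∀ i, 0 ≤ᵐ[μ] f i) (hf_sum : ∀ᵐ a ∂μ, Summable fun i => f i a) :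
    ∫ a, ∑' i, f i a ∂μ = ∑' i, ∫ a, f i a ∂μ := by
  have h_nonneg : ∀ᵐ a ∂μ, ∀ i, 0 ≤ f i a := ae_all_iff.2 hf_nonneg
  have h_ofReal : ∀ᵐ a ∂μ, ENNReal.ofReal (∑' i, f i a) = ∑' i, ENNReal.ofReal (f i a) := by
    filter_upwards [h_nonneg, hf_sum] with a ha hs
    exact ENNReal.ofReal_tsum_of_nonneg ha hs
  rw [integral_eq_lintegral_of_nonneg_ae
      (h_nonneg.mono fun a ha => tsum_nonneg ha)
      (AEMeasurable.tsum fun i => (hf_int i).aemeasurable).aestronglyMeasurable,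
    lintegral_congr_ae h_ofReal,
    lintegral_tsum fun i => (hf_int i).aemeasurable.ennreal_ofReal]
  simp_rw [← ofReal_integral_eq_lintegral_ofReal (hf_int _) (hf_nonneg _)]
  rw [ENNReal.tsum_toReal_eq fun _ => ENNReal.ofReal_ne_top]
  exact tsum_congr fun i => ENNReal.toReal_ofReal (integral_nonneg_of_ae (hf_nonneg i))

namespace Real

theorem inv_Gamma_le {s : ℝ} (hs : 0 < s) : (Gamma s)⁻¹ ≤ s * (s + 1) := by
  have h_two_le : Gamma 2 ≤ Gamma (s + 1 + 1) :=
    Gamma_strictMonoOn_Ici.monotoneOn (by simp) (by simp; linarith) (by linarith)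
  rw [Gamma_two, Gamma_add_one (by linarith), Gamma_add_one hs.ne'] at h_two_le
  rw [inv_le_iff_one_le_mul₀ (Gamma_pos_of_pos hs)]
  linarith

theorem eqOn_exp_neg_mul_rpow_mul_pow (k ρ x : ℝ) (m : ℕ) :
    EqOn (fun τ => exp (-τ) * τ ^ (k - 1) * (x * τ ^ ρ) ^ m)
      (fun τ => x ^ m * (exp (-τ) * τ ^ (k + ρ * m - 1))) (Ioi 0) := by
  intro τ (hτ : 0 < τ)
  have h_rpow : τ ^ (k - 1) * (τ ^ ρ) ^ m = τ ^ (k + ρ * m - 1) := by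
    rw [← rpow_mul_natCast hτ.le, ← rpow_add hτ]
    ring_nf
  simp only [mul_pow, ← h_rpow]
  ring

theorem integrableOn_exp_neg_mul_rpow_mul_pow {k ρ : ℝ} (x : ℝ) {m : ℕ} (h : 0 < k + ρ * m) :
    IntegrableOn (fun τ => exp (-τ) * τ ^ (k - 1) * (x * τ ^ ρ) ^ m) (Ioi 0) :=
  IntegrableOn.congr_fun ((GammaIntegral_convergent h).const_mul (x ^ m))
    (eqOn_exp_neg_mul_rpow_mul_pow k ρ x m).symm measurableSet_Ioi

theorem integral_exp_neg_mul_rpow_mul_pow {k ρ : ℝ} (x : ℝ) {m : ℕ} (h : 0 < k + ρ * m) :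
    ∫ τ in Ioi 0, exp (-τ) * τ ^ (k - 1) * (x * τ ^ ρ) ^ m = Gamma (k + ρ * m) * x ^ m := by
  rw [setIntegral_congr_fun measurableSet_Ioi (eqOn_exp_neg_mul_rpow_mul_pow k ρ x m),
    integral_const_mul, Gamma_eq_integral h, mul_comm]

end Real

theorem summable_redWright {ρ : ℝ} (hρ : 0 < ρ) (y : ℝ) :
    Summable fun n : ℕ => y ^ (n + 1) / (((n + 1).factorial : ℝ) * Gamma (ρ * ((n : ℝ) + 1))) := by
  have h_major : Summable fun n : ℕ => (ρ + 1) ^ 2 * ((4 * |y|) ^ (n + 1) / (n + 1).factorial) :=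
    ((summable_nat_add_iff 1).2 (summable_pow_div_factorial (4 * |y|))).mul_left _
  refine h_major.of_norm_bounded fun n => ?_
  set m : ℝ := (n : ℝ) + 1
  have hm : 1 ≤ m := by simp [m]
  have hΓ : 0 < Gamma (ρ * m) := Gamma_pos_of_pos (by positivity)
  have h_sq_le : m ^ 2 ≤ 4 ^ (n + 1) := by
    have : m ≤ 2 ^ (n + 1) := by
      simp only [m]
      exact_mod_cast (Nat.lt_two_pow_self (n := n + 1)).le
    calc m ^ 2 ≤ (2 ^ (n + 1)) ^ 2 := by gcongr
      _ = 4 ^ (n + 1) := by rw [← pow_mul, mul_comm, pow_mul]; norm_num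
  have h_inv_Gamma : (Gamma (ρ * m))⁻¹ ≤ (ρ + 1) ^ 2 * 4 ^ (n + 1) :=
    calc (Gamma (ρ * m))⁻¹ ≤ ρ * m * (ρ * m + 1) := inv_Gamma_le (by positivity)
      _ ≤ (ρ + 1) ^ 2 * m ^ 2 := by
        nlinarith [mul_nonneg (mul_nonneg hρ.le (by linarith : (0 : ℝ) ≤ m))
          (by linarith : (0 : ℝ) ≤ 2 * m - 1)]
      _ ≤ (ρ + 1) ^ 2 * 4 ^ (n + 1) := by gcongr
  rw [norm_div, norm_mul, norm_pow, Real.norm_eq_abs, Real.norm_of_nonneg (by positivity),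
    Real.norm_of_nonneg hΓ.le, div_mul_eq_div_div, div_eq_mul_inv _ (Gamma _)]
  calc |y| ^ (n + 1) / (n + 1).factorial * (Gamma (ρ * m))⁻¹
      ≤ |y| ^ (n + 1) / (n + 1).factorial * ((ρ + 1) ^ 2 * 4 ^ (n + 1)) := by gcongr
    _ = (ρ + 1) ^ 2 * ((4 * |y|) ^ (n + 1) / (n + 1).factorial) := by ring

theorem wright_structural_rep_pos (ρ k x : ℝ) (hρ : 0 < ρ) (hk : 0 < k) (hx : 0 < x) :
    wrightPsi ρ k x =
      ∫ τ in Ioi (0 : ℝ), Real.exp (-τ) * τ ^ (k - 1) * redWright ρ (x * τ ^ ρ) := by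
  set D : ℕ → ℝ := fun n => ((n + 1).factorial : ℝ) * Gamma (ρ * ((n : ℝ) + 1))
  set f : ℕ → ℝ → ℝ := fun n τ => exp (-τ) * τ ^ (k - 1) * (x * τ ^ ρ) ^ (n + 1) / D n
  have hD : ∀ n, 0 < D n := fun n => by
    have := Gamma_pos_of_pos (by positivity : 0 < ρ * (n + 1))
    positivity
  have h_exp : ∀ n : ℕ, 0 < k + ρ * ((n + 1 : ℕ) : ℝ) := fun n => by positivity
  have h_int : ∀ n, Integrable (f n) (volume.restrict (Ioi 0)) := fun n =>
    (integrableOn_exp_neg_mul_rpow_mul_pow x (h_exp n)).div_const _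
  have h_nonneg : ∀ n, 0 ≤ᵐ[volume.restrict (Ioi 0)] f n := fun n => by
    filter_upwards [ae_restrict_mem measurableSet_Ioi] with τ (hτ : 0 < τ)
    have := hD n
    positivity
  have h_sum : ∀ᵐ τ ∂volume.restrict (Ioi 0), Summable fun n => f n τ :=
    ae_of_all _ fun τ => ((summable_redWright hρ (x * τ ^ ρ)).mul_left
      (exp (-τ) * τ ^ (k - 1))).congr fun n => mul_div_assoc _ _ _ |>.symm
  calc wrightPsi ρ k x = ∑' n, ∫ τ in Ioi 0, f n τ := tsum_congr fun n => by
        rw [integral_div, integral_exp_neg_mul_rpow_mul_pow x (h_exp n)]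
        push_cast
        ring
    _ = ∫ τ in Ioi 0, ∑' n, f n τ := (integral_tsum_of_nonneg h_int h_nonneg h_sum).symm
    _ = _ := by simp only [f, D, mul_div_assoc, tsum_mul_left, redWright]
end

section
/- For every real ρ ≠ 0 and every positive integer k, there exist real numbers D_0, D_1, …, D_{k-1} with D_0 = 1 and (if k ≥ 2) D_1 = (1+ρ)·k(k-1)/2, such that for every real x ≠ 0, ∑_{n=1}^∞ (∏_{j=0}^{k-1} (ρn+j)) · xⁿ/n! = (ρx)^k e^x ∑_{n=0}^{k-1} D_n (ρx)^{-n}. (Here ∏_{j=0}^{k-1}(ρn+j) = Γ(k+ρn)/Γ(ρn), so the left-hand side is the Wright function ₁Ψ₁(ρ,k;ρ,0;x).) -/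
/-!
For `P(n) = ∏_{j<k} (ρn + a + j)` one has `Σ_{n ≥ 0} P(n) xⁿ/n! = eˣ R_{k,a}(x)` with a polynomial
`R_{k,a}` (`wrightPoly ρ k a`): splitting off the last factor `ρn + (a + k)` and using
`n xⁿ/n! = x · xⁿ⁻¹/(n-1)!` gives `R_{k+1,a} = ρX R_{k,a+ρ} + (a + k) R_{k,a}`. By this recurrence
`R_{k,a}` has degree `k`, leading coefficient `ρᵏ`, next coefficient `ρᵏ⁻¹(ka + (1+ρ)k(k-1)/2)`
and constant term `∏_{j<k} (a + j)`. For `a = 0` the `n = 0` term of the series and the constant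
term both vanish, and `D_n` is the coefficient of `xᵏ⁻ⁿ` in `R_{k,0}` divided by `ρᵏ⁻ⁿ`.
-/

open Real Finset Polynomial

open scoped Nat

noncomputable def wrightPoly (ρ : ℝ) : ℕ → ℝ → ℝ[X]
  | 0, _ => 1
  | k + 1, a => C ρ * X * wrightPoly ρ k (a + ρ) + C (a + k) * wrightPoly ρ k a

section wrightPoly

variable (ρ : ℝ)

theorem natDegree_wrightPoly_le (k : ℕ) (a : ℝ) : (wrightPoly ρ k a).natDegree ≤ k := by
  induction k generalizing a with
  | zero => simp [wrightPoly]
  | succ k ih =>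
    rw [wrightPoly, mul_assoc]
    refine (natDegree_add_le _ _).trans (max_le ?_ ?_)
    · refine (natDegree_C_mul_le _ _).trans (natDegree_mul_le.trans ?_)
      linarith [ih (a + ρ), natDegree_X_le (R := ℝ)]
    · exact (natDegree_C_mul_le _ _).trans ((ih a).trans k.le_succ)

theorem coeff_wrightPoly_self (k : ℕ) (a : ℝ) : (wrightPoly ρ k a).coeff k = ρ ^ k := by
  induction k generalizing a with
  | zero => simp [wrightPoly]
  | succ k ih =>
    have hlow : (wrightPoly ρ k a).coeff (k + 1) = 0 :=
      coeff_eq_zero_of_natDegree_lt ((natDegree_wrightPoly_le ρ k a).trans_lt k.lt_succ_self)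
    rw [wrightPoly, coeff_add, mul_assoc, coeff_C_mul, coeff_C_mul, coeff_X_mul, ih, hlow]
    ring

theorem coeff_wrightPoly_succ_self (k : ℕ) (a : ℝ) :
    (wrightPoly ρ (k + 1) a).coeff k = ρ ^ k * ((k + 1) * a + (1 + ρ) * (k + 1) * k / 2) := by
  induction k generalizing a with
  | zero => simp [wrightPoly]
  | succ k ih =>
    rw [wrightPoly, coeff_add, mul_assoc, coeff_C_mul, coeff_C_mul, coeff_X_mul, ih,
      coeff_wrightPoly_self]
    push_cast
    ring

theorem coeff_zero_wrightPoly (k : ℕ) (a : ℝ) :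
    (wrightPoly ρ k a).coeff 0 = ∏ j ∈ range k, (a + j) := by
  induction k generalizing a with
  | zero => simp [wrightPoly]
  | succ k ih =>
    rw [wrightPoly, coeff_add, mul_assoc, coeff_C_mul, coeff_C_mul, coeff_X_mul_zero, ih,
      prod_range_succ]
    ring

end wrightPoly

theorem hasSum_natCast_mul_pow_div_factorial {f : ℕ → ℝ} {x S : ℝ}
    (h : HasSum (fun n => f (n + 1) * (x ^ n / n !)) S) :
    HasSum (fun n => n * f n * (x ^ n / n !)) (x * S) := by
  refine (hasSum_nat_add_iff' 1).mp ?_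
  simp only [sum_range_one, Nat.cast_zero, zero_mul, sub_zero]
  refine (h.mul_left x).congr_fun fun n => ?_
  rw [Nat.factorial_succ]
  push_cast
  field_simp
  ring

theorem hasSum_prod_mul_pow_div_factorial (ρ : ℝ) (k : ℕ) (a x : ℝ) :
    HasSum (fun n : ℕ => (∏ j ∈ range k, (ρ * n + a + j)) * (x ^ n / n !))
      (exp x * (wrightPoly ρ k a).eval x) := by
  induction k generalizing a with
  | zero => simpa [wrightPoly, exp_eq_exp_ℝ] using NormedSpace.expSeries_div_hasSum_exp x
  | succ k ih =>
    have hshift : HasSum (fun n : ℕ => n * (ρ * ∏ j ∈ range k, (ρ * n + a + j)) * (x ^ n / n !))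
        (x * (ρ * (exp x * (wrightPoly ρ k (a + ρ)).eval x))) := by
      refine hasSum_natCast_mul_pow_div_factorial ?_
      refine ((ih (a + ρ)).mul_left ρ).congr_fun fun n => ?_
      rw [← mul_assoc]
      congr 2
      refine prod_congr rfl fun j _ => ?_
      push_cast
      ring
    convert hshift.add ((ih a).mul_left (a + k)) using 1
    · ext n
      rw [prod_range_succ]
      ring
    · simp only [wrightPoly, eval_add, eval_mul, eval_C, eval_X]
      ring

theorem eval_eq_pow_mul_sum_coeff_div_mul_inv_pow {p : ℝ[X]} {k : ℕ} (hdeg : p.natDegree ≤ k)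
    (hzero : p.coeff 0 = 0) {ρ x : ℝ} (hρ : ρ ≠ 0) (hx : x ≠ 0) :
    p.eval x = (ρ * x) ^ k * ∑ n ∈ range k, p.coeff (k - n) / ρ ^ (k - n) * ((ρ * x) ^ n)⁻¹ := by
  rw [eval_eq_sum_range' (Nat.lt_succ_of_le hdeg), sum_range_succ', hzero, zero_mul, add_zero,
    ← sum_range_reflect, mul_sum]
  refine sum_congr rfl fun n hn => ?_
  have hnk : n < k := mem_range.mp hn
  obtain ⟨m, rfl⟩ : ∃ m, k = n + (m + 1) := ⟨k - n - 1, by omega⟩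
  rw [show n + (m + 1) - 1 - n + 1 = m + 1 by omega, show n + (m + 1) - n = m + 1 by omega,
    pow_add]
  field_simp
  ring

theorem wright_polynomial_representation (ρ : ℝ) (hρ : ρ ≠ 0) (k : ℕ) (hk : 1 ≤ k) :
    ∃ D : ℕ → ℝ, D 0 = 1 ∧
      (2 ≤ k → D 1 = (1 + ρ) * (k : ℝ) * ((k : ℝ) - 1) / 2) ∧
      ∀ x : ℝ, x ≠ 0 →
        (∑' n : ℕ, (∏ j ∈ Finset.range k, (ρ * ((n : ℝ) + 1) + (j : ℝ))) *
            (x ^ (n + 1) / ((n + 1).factorial : ℝ))) =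
          (ρ * x) ^ k * Real.exp x * ∑ n ∈ Finset.range k, D n * ((ρ * x) ^ n)⁻¹ := by
  set R := wrightPoly ρ k 0
  have hR0 : R.coeff 0 = 0 := by
    rw [coeff_zero_wrightPoly, prod_eq_zero (mem_range.mpr hk)]
    simp
  refine ⟨fun n => R.coeff (k - n) / ρ ^ (k - n), ?_, fun h2 => ?_, fun x hx => ?_⟩
  · simp [R, coeff_wrightPoly_self, hρ]
  · obtain ⟨m, rfl⟩ : ∃ m, k = m + 2 := ⟨k - 2, by omega⟩
    simp only [R, show m + 2 - 1 = m + 1 by omega, coeff_wrightPoly_succ_self]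
    field_simp
    push_cast
    ring
  · have hsum := (hasSum_nat_add_iff' 1).mpr (hasSum_prod_mul_pow_div_factorial ρ k 0 x)
    rw [sum_range_one, prod_eq_zero (mem_range.mpr hk) (by simp), zero_mul, sub_zero] at hsum
    push_cast [add_zero] at hsum
    rw [hsum.tsum_eq, eval_eq_pow_mul_sum_coeff_div_mul_inv_pow (natDegree_wrightPoly_le ρ k 0) hR0
      hρ hx]
    ring
end

section
/- For every real x > 0, φ(-1/3, 0; x) = -(x^{3/2}/(3√3)) · (J_{-1/3}(y) + J_{1/3}(y)), where y = 2x^{3/2}/(3√3). -/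
open Real MeasureTheory Set Filter

/-- The Bessel function of the first kind,
J_ν(x) = ∑_{m=0}^∞ (-1)^m (x/2)^{2m+ν}/(m! Γ(ν+m+1)). -/
noncomputable def besselJ (ν x : ℝ) : ℝ :=
  ∑' m : ℕ, (-1 : ℝ) ^ m * (x / 2) ^ (2 * (m : ℝ) + ν) /
    ((m.factorial : ℝ) * Real.Gamma (ν + (m : ℝ) + 1))

/-!
Since `1 / Γ(-n/3)` vanishes for `3 ∣ n`, the series for `φ(-1/3, 0; x)` splits into the
residue classes `n = 3m + 1` and `n = 3m + 2`. Writing `n = 3m + r`, the identity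
`n! Γ(-n/3) = (-1)^(m+1) 3^n m! Γ(m + 2r/3)` turns the class of `r` term by term into
`-c` times the series of `J_ν(2c)`, where `ν = (2r - 3)/3` and `c = (x/3)^(3/2)`.
-/

open scoped Nat

theorem HasSum.of_nat_mul_add {M : Type*} [AddCommMonoid M] [TopologicalSpace M]
    [ContinuousAdd M] {f : ℕ → M} {k : ℕ} [NeZero k] {a : Fin k → M}
    (h : ∀ i : Fin k, HasSum (fun m => f (k * m + i)) (a i)) : HasSum f (∑ i, a i) := by
  have hmod (m : ℕ) (i : Fin k) : (k * m + i) % k = i := by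
    rw [Nat.mul_add_mod, Nat.mod_eq_of_lt i.isLt]
  have hinj (i : Fin k) : Function.Injective fun m => k * m + i := fun m₁ m₂ hm =>
    Nat.eq_of_mul_eq_mul_left (Nat.pos_of_neZero k) (Nat.add_right_cancel hm)
  have hdisj : ((Finset.univ : Finset (Fin k)) : Set (Fin k)).Pairwise
      (Function.onFun Disjoint fun i => range fun m => k * m + i) := by
    rintro i - j - hij
    refine Set.disjoint_left.2 ?_
    rintro _ ⟨m₁, rfl⟩ ⟨m₂, hm⟩
    exact hij (Fin.ext (by rw [← hmod m₁ i, ← hmod m₂ j]; exact congrArg (· % k) hm.symm))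
  have hcover :
      (⋃ i ∈ (Finset.univ : Finset (Fin k)), range fun m => k * m + (i : ℕ)) = univ :=
    eq_univ_of_forall fun n => mem_biUnion (Finset.mem_coe.2 (Finset.mem_univ
      ⟨n % k, Nat.mod_lt n (Nat.pos_of_neZero k)⟩)) ⟨n / k, Nat.div_add_mod n k⟩
  have := hasSum_sum_disjoint Finset.univ hdisj fun i _ => (hinj i).hasSum_range_iff.2 (h i)
  rwa [hasSum_subtype_iff_indicator, hcover, indicator_univ] at this

theorem summable_besselJ_terms (ν : ℝ) {c : ℝ} (hc : 0 < c) :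
    Summable fun m : ℕ =>
      (-1 : ℝ) ^ m * c ^ (2 * (m : ℝ) + ν) / ((m ! : ℝ) * Gamma (ν + m + 1)) := by
  refine Summable.of_norm_bounded_eventually_nat
    ((Real.summable_pow_div_factorial (c ^ 2)).mul_left (c ^ ν)) ?_
  filter_upwards [eventually_ge_atTop ⌈1 - ν⌉₊] with m hm
  have hΓ : 1 ≤ Gamma (ν + m + 1) := by
    have h2 : (2 : ℝ) ≤ ν + m + 1 := by linarith [Nat.ceil_le.1 hm]
    simpa [Real.Gamma_two] using Gamma_strictMonoOn_Ici.monotoneOn (mem_Ici.2 le_rfl) h2 h2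
  have hpow : c ^ (2 * (m : ℝ) + ν) = c ^ ν * (c ^ 2) ^ m := by
    rw [rpow_add hc, mul_comm, ← pow_mul, ← rpow_natCast]
    push_cast
    rfl
  rw [norm_div, norm_mul, norm_pow, norm_neg, norm_one, one_pow, one_mul, hpow,
    Real.norm_of_nonneg (by positivity), Real.norm_of_nonneg (by positivity), mul_div_assoc]
  gcongr
  exact le_mul_of_one_le_right (by positivity) hΓ

theorem hasSum_besselJ (ν : ℝ) {c : ℝ} (hc : 0 < c) :
    HasSum (fun m : ℕ =>
        (-1 : ℝ) ^ m * c ^ (2 * (m : ℝ) + ν) / ((m ! : ℝ) * Gamma (ν + m + 1)))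
      (besselJ ν (2 * c)) := by
  simpa [besselJ] using (summable_besselJ_terms ν hc).hasSum

/-- The series may be indexed from `n = 0`: that term is `x⁰ / (0! * Gamma 0) = 1 / 0 = 0`. -/
theorem redWright_eq_of_hasSum {ρ x a : ℝ}
    (h : HasSum (fun n : ℕ => x ^ n / ((n ! : ℝ) * Gamma (ρ * n))) a) :
    redWright ρ x = a := by
  simpa [redWright, Gamma_zero] using ((hasSum_nat_add_iff' 1).2 h).tsum_eq

/-- The induction step needs `(3m + r + 1)(3m + r + 2) = 9(m + 1)(m + 2r/3)`, which holds
exactly when `(r - 1)(r - 2) = 0`. -/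
theorem factorial_mul_Gamma_neg_div_three {r : ℕ} (hr : r = 1 ∨ r = 2) (m : ℕ) :
    ((3 * m + r)! : ℝ) * Gamma (-(m + r / 3)) =
      (-1) ^ (m + 1) * 3 ^ (3 * m + r) * m ! * Gamma (m + 2 * r / 3) := by
  induction m with
  | zero =>
    rcases hr with rfl | rfl
    · have h := Gamma_add_one (s := -1 / 3) (by norm_num)
      norm_num at h ⊢
      linarith
    · have h₁ := Gamma_add_one (s := -2 / 3) (by norm_num)
      have h₂ := Gamma_add_one (s := 1 / 3) (by norm_num)
      norm_num at h₁ h₂ ⊢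
      linarith
  | succ m ih =>
    have hr₀ : (0 : ℝ) < r := by rcases hr with rfl | rfl <;> norm_num
    have hr' : ((r : ℝ) - 1) * (r - 2) = 0 := by rcases hr with rfl | rfl <;> norm_num
    have hfac : ((3 * (m + 1) + r)! : ℝ) =
        (3 * m + r + 3) * (3 * m + r + 2) * (3 * m + r + 1) * (3 * m + r)! := by
      rw [show 3 * (m + 1) + r = 3 * m + r + 1 + 1 + 1 by ring]
      push_cast [Nat.factorial_succ]
      ring
    have hneg : Gamma (-(m + r / 3)) = -(m + 1 + r / 3) * Gamma (-(m + 1 + r / 3)) := by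
      rw [show -((m : ℝ) + r / 3) = -(m + 1 + r / 3) + 1 by ring, Gamma_add_one]
      intro h; linarith [h]
    have hpos : Gamma (m + 1 + 2 * r / 3) = (m + 2 * r / 3) * Gamma (m + 2 * r / 3) := by
      rw [add_right_comm, Gamma_add_one (by positivity)]
    rw [hneg] at ih
    push_cast [hfac, Nat.factorial_succ, hpos]
    linear_combination (-27 * ((m : ℝ) + 1) * (m + 2 * r / 3)) * ih +
      ((3 * m + r + 3) * (3 * m + r)! * Gamma (-(m + 1 + r / 3))) * hr'

theorem redWright_neg_third_term_eq {x : ℝ} (hx : 0 < x) {r : ℕ} (hr : r = 1 ∨ r = 2)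
    (m : ℕ) :
    x ^ (3 * m + r) / (((3 * m + r)! : ℝ) * Gamma (-1 / 3 * ((3 * m + r : ℕ) : ℝ))) =
      -(x / 3) ^ ((3 : ℝ) / 2) *
        ((-1) ^ m * ((x / 3) ^ ((3 : ℝ) / 2)) ^ (2 * (m : ℝ) + (2 * r - 3) / 3) /
          ((m ! : ℝ) * Gamma ((2 * r - 3) / 3 + m + 1))) := by
  have hr₀ : (0 : ℝ) < r := by rcases hr with rfl | rfl <;> norm_num
  have hΓ : 0 < Gamma (m + 2 * r / 3) := Gamma_pos_of_pos (by positivity)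
  set c := (x / 3) ^ ((3 : ℝ) / 2)
  have hpow : c * c ^ (2 * (m : ℝ) + (2 * r - 3) / 3) = (x / 3) ^ (3 * m + r) := by
    calc c * c ^ (2 * (m : ℝ) + (2 * r - 3) / 3)
        = c ^ (1 + (2 * (m : ℝ) + (2 * r - 3) / 3)) := by
          rw [rpow_add (by positivity) 1, rpow_one]
      _ = (x / 3) ^ (((3 * m + r : ℕ) : ℝ)) := by
        rw [← rpow_mul (by positivity)]; congr 1; push_cast; ring
      _ = (x / 3) ^ (3 * m + r) := rpow_natCast _ _
  rw [show -1 / 3 * ((3 * m + r : ℕ) : ℝ) = -(m + r / 3) by push_cast; ring,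
    factorial_mul_Gamma_neg_div_three hr,
    show (2 * r - 3) / 3 + (m : ℝ) + 1 = m + 2 * r / 3 by ring,
    show ∀ a b d : ℝ, -c * (a * b / d) = -(a * (c * b) / d) by intros; ring,
    hpow, div_pow, pow_succ]
  field_simp
  ring_nf
  rw [pow_mul', neg_one_sq, one_pow]

theorem hasSum_redWright_neg_third_residue {x : ℝ} (hx : 0 < x) {r : ℕ}
    (hr : r = 1 ∨ r = 2) :
    HasSum (fun m : ℕ =>
        x ^ (3 * m + r) / (((3 * m + r)! : ℝ) * Gamma (-1 / 3 * ((3 * m + r : ℕ) : ℝ))))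
      (-(x / 3) ^ ((3 : ℝ) / 2) * besselJ ((2 * r - 3) / 3) (2 * (x / 3) ^ ((3 : ℝ) / 2))) := by
  simpa only [redWright_neg_third_term_eq hx hr] using
    (hasSum_besselJ ((2 * r - 3) / 3) (by positivity)).mul_left (-(x / 3) ^ ((3 : ℝ) / 2))

theorem redWright_neg_third_term_three_mul (x : ℝ) (m : ℕ) :
    x ^ (3 * m) / (((3 * m)! : ℝ) * Gamma (-1 / 3 * ((3 * m : ℕ) : ℝ))) = 0 := by
  rw [show -1 / 3 * ((3 * m : ℕ) : ℝ) = -m by push_cast; ring, Gamma_neg_nat_eq_zero,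
    mul_zero, div_zero]

theorem redWright_third_besselJ_rep (x : ℝ) (hx : 0 < x) :
    redWright (-1/3) x =
      -(x ^ ((3 : ℝ) / 2) / (3 * Real.sqrt 3)) *
        (besselJ (-1/3) (2 * x ^ ((3 : ℝ) / 2) / (3 * Real.sqrt 3)) +
         besselJ (1/3) (2 * x ^ ((3 : ℝ) / 2) / (3 * Real.sqrt 3))) := by
  have hc : x ^ ((3 : ℝ) / 2) / (3 * √3) = (x / 3) ^ ((3 : ℝ) / 2) := by
    rw [div_rpow hx.le (by norm_num), sqrt_eq_rpow, ← rpow_one_add' (by norm_num) (by norm_num)]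
    norm_num
  rw [mul_div_assoc, hc, mul_add]
  apply redWright_eq_of_hasSum
  have key : HasSum (fun n : ℕ => x ^ n / ((n ! : ℝ) * Gamma (-1 / 3 * n)))
      (∑ i, ![0, -(x / 3) ^ ((3 : ℝ) / 2) * besselJ (-1 / 3) (2 * (x / 3) ^ ((3 : ℝ) / 2)),
        -(x / 3) ^ ((3 : ℝ) / 2) * besselJ (1 / 3) (2 * (x / 3) ^ ((3 : ℝ) / 2))] i) := by
    refine HasSum.of_nat_mul_add fun i => ?_
    fin_cases i
    · exact hasSum_zero.congr_fun fun m => redWright_neg_third_term_three_mul x m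
    · convert hasSum_redWright_neg_third_residue hx (r := 1) (by norm_num) using 3; norm_num
    · convert hasSum_redWright_neg_third_residue hx (r := 2) (by norm_num) using 3; norm_num
  simpa [Fin.sum_univ_three] using key
end
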